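/- Let Q = (0,1)^N be the open unit cube in ℝ^N and A, B two N×N real matrices. Let u : ℝ^N → ℝ^N be continuous on the closed cube [0,1]^N, differentiable at every point of Q with derivative Du(x), such that x ↦ tr(Du(x)) is Lebesgue integrable on Q and u(x) = Ax for every x ∈ ∂Q. Then ∫_Q |tr(Du(x)) − tr B| dx ≥ |tr(A − B)|. -/

import Mathlib

/-!
Applying the divergence theorem to `u - A·x`, which vanishes on `∂Q`, gives
`∫_Q tr Du = tr A`; hence `|tr(A - B)| = |∫_Q (tr Du - tr B)| ≤ ∫_Q |tr Du - tr B|`.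
-/

open MeasureTheory

/-- The open unit cube `(0,1)^N` in `ℝ^N`. -/
def openCube (N : ℕ) : Set (Fin N → ℝ) := Set.univ.pi fun _ => Set.Ioo (0 : ℝ) 1

open Set

theorem LinearMap.trace_eq_sum_apply_single {R ι : Type*} [CommRing R] [Fintype ι]
    [DecidableEq ι] (f : (ι → R) →ₗ[R] (ι → R)) :
    LinearMap.trace R (ι → R) f = ∑ i, f (Pi.single i 1) i := by
  simp [LinearMap.trace_eq_matrix_trace R (Pi.basisFun R ι), Matrix.trace]

theorem openCube_ae_eq_Icc (N : ℕ) : openCube N =ᵐ[volume] Icc (0 : Fin N → ℝ) 1 :=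
  Measure.univ_pi_Ioo_ae_eq_Icc

theorem volume_openCube (N : ℕ) : volume (openCube N) = 1 := by
  simp [openCube, volume_pi_pi]

theorem frontier_openCube (N : ℕ) : frontier (openCube N) = Icc 0 1 \ openCube N := by
  have hopen : IsOpen (openCube N) := isOpen_set_pi finite_univ fun _ _ => isOpen_Ioo
  rw [frontier, hopen.interior_eq, openCube, closure_pi_set, ← pi_univ_Icc]
  simp only [closure_Ioo zero_ne_one, Pi.zero_apply, Pi.one_apply]

theorem integral_trace_eq_zero_of_forall_boundary_eq_zero {n : ℕ} {a b : Fin (n + 1) → ℝ}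
    (hle : a ≤ b) {w : (Fin (n + 1) → ℝ) → Fin (n + 1) → ℝ}
    {Dw : (Fin (n + 1) → ℝ) → (Fin (n + 1) → ℝ) →L[ℝ] (Fin (n + 1) → ℝ)}
    (hcont : ContinuousOn w (Icc a b))
    (hdiff : ∀ x ∈ univ.pi fun i => Ioo (a i) (b i), HasFDerivAt w (Dw x) x)
    (hint : IntegrableOn
      (fun x => LinearMap.trace ℝ _ (Dw x : (Fin (n + 1) → ℝ) →ₗ[ℝ] (Fin (n + 1) → ℝ)))
      (Icc a b))
    (hzero : ∀ x ∈ Icc a b \ univ.pi fun i => Ioo (a i) (b i), w x = 0) :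
    ∫ x in Icc a b, LinearMap.trace ℝ _ (Dw x : (Fin (n + 1) → ℝ) →ₗ[ℝ] (Fin (n + 1) → ℝ)) =
      0 := by
  simp only [LinearMap.trace_eq_sum_apply_single, ContinuousLinearMap.coe_coe] at hint ⊢
  rw [integral_divergence_of_hasFDerivAt_off_countable a b hle w Dw ∅ countable_empty hcont
    (fun x hx => hdiff x hx.1) hint]
  refine Finset.sum_eq_zero fun i _ => ?_
  have hface : ∀ c, (c = a i ∨ c = b i) → ∀ x ∈ Icc (a ∘ i.succAbove) (b ∘ i.succAbove),
      w (i.insertNth c x) = 0 := by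
    refine fun c hc x hx => hzero _ ⟨Fin.insertNth_mem_Icc.2 ⟨?_, hx⟩, fun h => ?_⟩
    · rcases hc with rfl | rfl <;> simp [hle i]
    · have hci := h i (mem_univ i)
      rw [Fin.insertNth_apply_same] at hci
      rcases hc with rfl | rfl <;> simp at hci
  rw [setIntegral_congr_fun measurableSet_Icc fun x hx => congrFun (hface _ (.inr rfl) x hx) i,
    setIntegral_congr_fun measurableSet_Icc fun x hx => congrFun (hface _ (.inl rfl) x hx) i]
  simp

theorem setIntegral_openCube_trace_eq_trace {N : ℕ} (A : Matrix (Fin N) (Fin N) ℝ)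
    {u : (Fin N → ℝ) → Fin N → ℝ} {Du : (Fin N → ℝ) → (Fin N → ℝ) →L[ℝ] (Fin N → ℝ)}
    (hcont : ContinuousOn u (Icc 0 1))
    (hdiff : ∀ x ∈ openCube N, HasFDerivAt u (Du x) x)
    (hint : IntegrableOn
      (fun x => LinearMap.trace ℝ (Fin N → ℝ) (Du x : (Fin N → ℝ) →ₗ[ℝ] (Fin N → ℝ)))
      (openCube N))
    (hbdry : ∀ x ∈ frontier (openCube N), u x = A.mulVec x) :
    ∫ x in openCube N, LinearMap.trace ℝ (Fin N → ℝ) (Du x : (Fin N → ℝ) →ₗ[ℝ] (Fin N → ℝ)) =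
      A.trace := by
  cases N with
  | zero => simp [LinearMap.trace_eq_sum_apply_single, Matrix.trace]
  | succ n =>
    set L := LinearMap.toContinuousLinearMap (Matrix.toLin' A)
    have hL : LinearMap.trace ℝ _ (L : (Fin (n + 1) → ℝ) →ₗ[ℝ] (Fin (n + 1) → ℝ)) = A.trace :=
      Matrix.trace_toLin'_eq A
    have hLint : IntegrableOn (fun _ => A.trace) (Icc (0 : Fin (n + 1) → ℝ) 1) :=
      integrableOn_const measure_Icc_lt_top.ne
    replace hint := hint.congr_set_ae (openCube_ae_eq_Icc _).symm
    have hzero := integral_trace_eq_zero_of_forall_boundary_eq_zero zero_le_one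
      (w := fun x => u x - L x) (Dw := fun x => Du x - L)
      (hcont.sub L.continuous.continuousOn) (fun x hx => (hdiff x hx).sub L.hasFDerivAt)
      (by simp only [ContinuousLinearMap.toLinearMap_sub, map_sub, hL]; exact hint.sub hLint)
      (fun x hx => by simp [hbdry x (frontier_openCube _ ▸ hx), L])
    simp only [ContinuousLinearMap.toLinearMap_sub, map_sub, hL] at hzero
    rw [setIntegral_congr_set (openCube_ae_eq_Icc _), ← sub_eq_zero, ← hzero,
      integral_sub hint hLint, setIntegral_const]
    simp [measureReal_def, Real.volume_Icc_pi_toReal zero_le_one]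

theorem integral_abs_trace_lower_bound_general (N : ℕ)
    (A B : Matrix (Fin N) (Fin N) ℝ)
    (u : (Fin N → ℝ) → Fin N → ℝ)
    (Du : (Fin N → ℝ) → ((Fin N → ℝ) →L[ℝ] (Fin N → ℝ)))
    (hcont : ContinuousOn u (Set.Icc (0 : Fin N → ℝ) 1))
    (hdiff : ∀ x ∈ openCube N, HasFDerivAt u (Du x) x)
    (hint : IntegrableOn
      (fun x => LinearMap.trace ℝ (Fin N → ℝ) (Du x : (Fin N → ℝ) →ₗ[ℝ] (Fin N → ℝ)))
      (openCube N))
    (hbdry : ∀ x ∈ frontier (openCube N), u x = A.mulVec x) :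
    ∫ x in openCube N,
        |LinearMap.trace ℝ (Fin N → ℝ) (Du x : (Fin N → ℝ) →ₗ[ℝ] (Fin N → ℝ)) - B.trace| ≥
      |Matrix.trace (A - B)| := by
  have hB : IntegrableOn (fun _ => B.trace) (openCube N) :=
    integrableOn_const (by simp [volume_openCube])
  calc |(A - B).trace|
      = |∫ x in openCube N,
          (LinearMap.trace ℝ (Fin N → ℝ) (Du x : (Fin N → ℝ) →ₗ[ℝ] (Fin N → ℝ)) - B.trace)| := by
        rw [integral_sub hint hB, setIntegral_openCube_trace_eq_trace A hcont hdiff hint hbdry,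
          setIntegral_const, measureReal_def, volume_openCube, Matrix.trace_sub]
        simp
    _ ≤ _ := abs_integral_le_integral_abs

/-- Lower bound for the relaxed bulk density of the purely interfacial energy
`Ψ^{|·|}`: for any jump-free competitor `u`, continuous on the closed cube,
differentiable on `Q = (0,1)^N` with `tr(Du)` integrable and `u = Ax` on `∂Q`,
one has `∫_Q |tr(Du x) − tr B| dx ≥ |tr(A − B)|`. -/
theorem integral_abs_trace_lower_bound (N : ℕ) (hN : 1 ≤ N)
    (A B : Matrix (Fin N) (Fin N) ℝ)
    (u : (Fin N → ℝ) → Fin N → ℝ)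
    (Du : (Fin N → ℝ) → ((Fin N → ℝ) →L[ℝ] (Fin N → ℝ)))
    (hcont : ContinuousOn u (Set.Icc (0 : Fin N → ℝ) 1))
    (hdiff : ∀ x ∈ openCube N, HasFDerivAt u (Du x) x)
    (hint : IntegrableOn
      (fun x => LinearMap.trace ℝ (Fin N → ℝ) (Du x : (Fin N → ℝ) →ₗ[ℝ] (Fin N → ℝ)))
      (openCube N))
    (hbdry : ∀ x ∈ frontier (openCube N), u x = A.mulVec x) :
    ∫ x in openCube N,
        |LinearMap.trace ℝ (Fin N → ℝ) (Du x : (Fin N → ℝ) →ₗ[ℝ] (Fin N → ℝ)) - B.trace| ≥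
      |Matrix.trace (A - B)| :=
  integral_abs_trace_lower_bound_general N A B u Du hcont hdiff hint hbdry
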